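/- arXiv:2009.03616 — 4 statements merged into one kernel-verified Lean document; each statement's English description precedes it below -/
import Mathlib

section
/- Under the assumption that P ≠ ∅ and that every arc of G is used by at least one cycle cover (i.e., the set J = {f ∈ A : x_f = 0 for all x ∈ P} is empty), the dimension of the directed 2-factor polytope Conv(P) equals m − α, where α is the rank of the (2n)×m matrix obtained by stacking U on top of V. -/
open Matrix Finset Function Filter Topology

/-!
By the Birkhoff–von Neumann theorem the convex hull of the cycle covers is the polytope
`{x ≥ 0, Ux = Vx = 1}`: the arc weights of a feasible `x` form a doubly stochastic matrix, and
every permutation with positive weight in its Birkhoff decomposition runs along arcs of `G`, since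
in a simple digraph an arc is determined by its endpoints. Averaging, for each arc, a cycle cover
through it gives a strictly positive point of the polytope, so the polytope contains a
neighbourhood of that point in the affine space `{Ux = Vx = 1}`. Its affine hull therefore has
direction `ker [U; V]`, of dimension `m - α` by rank–nullity.
-/

section Polyhedron

variable {ι : Type*} [Fintype ι]

theorem Matrix.fromRows_mulVec_eq_one_iff {m₁ m₂ : Type*} {A : Matrix m₁ ι ℝ} {B : Matrix m₂ ι ℝ}
    {x : ι → ℝ} : fromRows A B *ᵥ x = 1 ↔ A *ᵥ x = 1 ∧ B *ᵥ x = 1 := by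
  rw [fromRows_mulVec, ← Sum.elim_one_one, Sum.elim_eq_iff]

theorem convex_setOf_nonneg_mulVec_eq {m₀ : Type*} (M : Matrix m₀ ι ℝ) (b : m₀ → ℝ) :
    Convex ℝ {x | 0 ≤ x ∧ M *ᵥ x = b} :=
  (convex_Ici 0).inter ((convex_singleton b).linear_preimage M.mulVecLin)

theorem exists_ne_zero_nonneg_add_smul {p : ι → ℝ} (hp : ∀ e, 0 < p e) (z : ι → ℝ) :
    ∃ c : ℝ, c ≠ 0 ∧ 0 ≤ p + c • z := by
  have h : ∀ᶠ c in 𝓝 (0 : ℝ), ∀ e, 0 < p e + c * z e := eventually_all.2 fun e =>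
    ((continuous_const.add (continuous_id.mul continuous_const)).tendsto 0).eventually_const_lt
      (by simpa using hp e)
  obtain ⟨c, hc, hc0⟩ := ((h.filter_mono nhdsWithin_le_nhds).and self_mem_nhdsWithin).exists
    (f := 𝓝[≠] 0)
  exact ⟨c, hc0, fun e => (hc e).le⟩

theorem direction_affineSpan_setOf_nonneg_mulVec_eq {m₀ : Type*} {M : Matrix m₀ ι ℝ}
    {b : m₀ → ℝ} {p : ι → ℝ} (hp : ∀ e, 0 < p e) (hMp : M *ᵥ p = b) :
    (affineSpan ℝ {x | 0 ≤ x ∧ M *ᵥ x = b}).direction = LinearMap.ker M.mulVecLin := by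
  rw [direction_affineSpan]
  refine le_antisymm ?_ fun z hz => ?_
  · rw [vectorSpan_def, Submodule.span_le]
    rintro _ ⟨x, ⟨-, hx⟩, y, ⟨-, hy⟩, rfl⟩
    simp [mulVec_sub, hx, hy]
  · rw [LinearMap.mem_ker, mulVecLin_apply] at hz
    obtain ⟨c, hc, hpc⟩ := exists_ne_zero_nonneg_add_smul hp z
    have hcz : c • z ∈ vectorSpan ℝ {x | 0 ≤ x ∧ M *ᵥ x = b} := by
      have hpz : p + c • z ∈ {x | 0 ≤ x ∧ M *ᵥ x = b} :=
        ⟨hpc, by rw [mulVec_add, mulVec_smul, hz, smul_zero, add_zero, hMp]⟩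
      have hp' : p ∈ {x | 0 ≤ x ∧ M *ᵥ x = b} := ⟨fun e => (hp e).le, hMp⟩
      simpa using vsub_mem_vectorSpan ℝ hpz hp'
    simpa [hc] using Submodule.smul_mem _ c⁻¹ hcz

theorem exists_pos_mem_convexHull {s : Set (ι → ℝ)} (hs : s.Nonempty) (hs0 : ∀ x ∈ s, 0 ≤ x)
    (hcov : ∀ e, ∃ x ∈ s, x e ≠ 0) : ∃ p ∈ convexHull ℝ s, ∀ e, 0 < p e := by
  cases isEmpty_or_nonempty ι
  · obtain ⟨x, hx⟩ := hs
    exact ⟨x, subset_convexHull ℝ s hx, isEmptyElim⟩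
  choose x hxs hxe using hcov
  refine ⟨∑ f, (Fintype.card ι : ℝ)⁻¹ • x f, (convex_convexHull ℝ s).sum_mem
    (fun _ _ => by positivity) (by simp) fun f _ => subset_convexHull ℝ s (hxs f), fun e => ?_⟩
  have hpos : 0 < ∑ f, x f e := sum_pos' (fun f _ => hs0 _ (hxs f) e)
    ⟨e, mem_univ e, lt_of_le_of_ne (hs0 _ (hxs e) e) (hxe e).symm⟩
  simpa [Finset.sum_apply, ← mul_sum] using mul_pos (by positivity) hpos

theorem Matrix.finrank_ker_mulVecLin {m₀ : Type*} [Fintype m₀] (M : Matrix m₀ ι ℝ) :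
    Module.finrank ℝ (LinearMap.ker M.mulVecLin) = Fintype.card ι - M.rank := by
  have := LinearMap.finrank_range_add_finrank_ker M.mulVecLin
  rw [Module.finrank_fintype_fun_eq_card] at this
  rw [Matrix.rank]
  omega

end Polyhedron

section CycleCover

variable {ι κ : Type*} [DecidableEq κ]

def incidenceMatrix (f : ι → κ) : Matrix κ ι ℝ :=
  of fun i e => if f e = i then 1 else 0

def permCover (src tgt : ι → κ) (σ : Equiv.Perm κ) : ι → ℝ :=
  fun e => if σ (src e) = tgt e then 1 else 0

variable {src tgt : ι → κ}

theorem permCover_eq_permCover_symm (σ : Equiv.Perm κ) :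
    permCover src tgt σ = permCover tgt src σ.symm := by
  ext e; simp only [permCover, Equiv.symm_apply_eq, @eq_comm _ (tgt e)]

variable [Fintype ι]

theorem incidenceMatrix_mulVec_apply (f : ι → κ) (x : ι → ℝ) (i : κ) :
    (incidenceMatrix f *ᵥ x) i = ∑ e with f e = i, x e := by
  simp [incidenceMatrix, mulVec, dotProduct, sum_filter]

def cycleCovers (src tgt : ι → κ) : Set (ι → ℝ) :=
  {x | (∀ e, x e = 0 ∨ x e = 1) ∧ incidenceMatrix src *ᵥ x = 1 ∧ incidenceMatrix tgt *ᵥ x = 1}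

def arcWeight (src tgt : ι → κ) (x : ι → ℝ) : Matrix κ κ ℝ :=
  of fun i j => ∑ e with src e = i ∧ tgt e = j, x e

theorem arcWeight_mem_doublyStochastic [Fintype κ] {x : ι → ℝ} (hx : 0 ≤ x)
    (hsrc : incidenceMatrix src *ᵥ x = 1) (htgt : incidenceMatrix tgt *ᵥ x = 1) :
    arcWeight src tgt x ∈ doublyStochastic ℝ κ := by
  refine mem_doublyStochastic_iff_sum.2 ⟨fun i j => sum_nonneg fun e _ => hx e, fun i => ?_,
    fun j => ?_⟩
  · simp_rw [arcWeight, of_apply, ← filter_filter, sum_fiberwise, ← incidenceMatrix_mulVec_apply,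
      hsrc, Pi.one_apply]
  · have hcol : ∀ i, arcWeight src tgt x i j = ∑ e ∈ {e | tgt e = j} with src e = i, x e :=
      fun i => by rw [filter_filter]; simp only [arcWeight, of_apply, and_comm]
    simp_rw [hcol, sum_fiberwise, ← incidenceMatrix_mulVec_apply, htgt, Pi.one_apply]

theorem arcWeight_apply_of_injective (hinj : Injective fun e => (src e, tgt e)) (x : ι → ℝ)
    (e : ι) : arcWeight src tgt x (src e) (tgt e) = x e := by
  have : ({f | src f = src e ∧ tgt f = tgt e} : Finset ι) = {e} := by
    ext f
    simp only [mem_filter, mem_univ, true_and, mem_singleton]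
    exact ⟨fun h => hinj (Prod.ext h.1 h.2), by rintro rfl; simp⟩
  simp [arcWeight, this]

theorem exists_arc_of_arcWeight_ne_zero {x : ι → ℝ} {i j : κ} (h : arcWeight src tgt x i j ≠ 0) :
    ∃ e, src e = i ∧ tgt e = j := by
  obtain ⟨e, he⟩ := nonempty_of_sum_ne_zero h
  exact ⟨e, (mem_filter.1 he).2⟩

theorem incidenceMatrix_mulVec_permCover (hinj : Injective fun e => (src e, tgt e))
    {σ : Equiv.Perm κ} (harc : ∀ i, ∃ e, src e = i ∧ tgt e = σ i) :
    incidenceMatrix src *ᵥ permCover src tgt σ = 1 := by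
  funext i
  obtain ⟨e, rfl, he⟩ := harc i
  rw [incidenceMatrix_mulVec_apply, Pi.one_apply, sum_eq_single_of_mem e (by simp)]
  · simp [permCover, he]
  · intro f hf hfe
    have hsf : src f = src e := (mem_filter.1 hf).2
    simp only [permCover, hsf, ite_eq_right_iff, one_ne_zero, imp_false]
    exact fun h => hfe (hinj (Prod.ext hsf (h.symm.trans he.symm)))

theorem permCover_mem_cycleCovers (hinj : Injective fun e => (src e, tgt e))
    {σ : Equiv.Perm κ} (harc : ∀ i, ∃ e, src e = i ∧ tgt e = σ i) :
    permCover src tgt σ ∈ cycleCovers src tgt := by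
  refine ⟨fun e => by unfold permCover; split_ifs <;> simp,
    incidenceMatrix_mulVec_permCover hinj harc, ?_⟩
  -- in-degrees for `σ` are out-degrees for `σ⁻¹` in the reversed graph
  rw [permCover_eq_permCover_symm]
  refine incidenceMatrix_mulVec_permCover (Prod.swap_injective.comp hinj) fun j => ?_
  obtain ⟨e, he, hej⟩ := harc (σ.symm j)
  exact ⟨e, by simpa using hej, he⟩

theorem mem_convexHull_cycleCovers [Fintype κ] (hinj : Injective fun e => (src e, tgt e))
    {x : ι → ℝ} (hx : 0 ≤ x) (hsrc : incidenceMatrix src *ᵥ x = 1)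
    (htgt : incidenceMatrix tgt *ᵥ x = 1) : x ∈ convexHull ℝ (cycleCovers src tgt) := by
  obtain ⟨w, hw0, hw1, hwD⟩ :=
    exists_eq_sum_perm_of_mem_doublyStochastic (arcWeight_mem_doublyStochastic hx hsrc htgt)
  have hD : ∀ i j, arcWeight src tgt x i j = ∑ σ, w σ * if σ i = j then 1 else 0 := by
    intro i j
    simp [← hwD, Matrix.sum_apply, PEquiv.toMatrix_apply, Equiv.toPEquiv_apply]
  have hx_eq : x = ∑ σ, w σ • permCover src tgt σ := by
    funext e
    simp [← arcWeight_apply_of_injective hinj x e, hD, permCover]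
  rw [hx_eq, ← finsum_eq_sum_of_fintype]
  refine (convex_convexHull ℝ _).finsum_mem hw0 (by rwa [finsum_eq_sum_of_fintype])
    fun σ hσ => subset_convexHull ℝ _ (permCover_mem_cycleCovers hinj fun i => ?_)
  refine exists_arc_of_arcWeight_ne_zero (x := x) (ne_of_gt ?_)
  calc 0 < w σ := lt_of_le_of_ne (hw0 σ) (Ne.symm hσ)
    _ ≤ arcWeight src tgt x i (σ i) := by
      rw [hD]
      simpa using single_le_sum (f := fun τ => w τ * if τ i = σ i then 1 else 0)
        (fun τ _ => mul_nonneg (hw0 τ) (ite_nonneg zero_le_one le_rfl)) (mem_univ σ)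

theorem convexHull_cycleCovers [Fintype κ] (hinj : Injective fun e => (src e, tgt e)) :
    convexHull ℝ (cycleCovers src tgt) =
      {x | 0 ≤ x ∧ fromRows (incidenceMatrix src) (incidenceMatrix tgt) *ᵥ x = 1} := by
  refine subset_antisymm (convexHull_min ?_ (convex_setOf_nonneg_mulVec_eq _ _)) ?_
  · rintro x ⟨h01, hx⟩
    exact ⟨fun e => by rcases h01 e with h | h <;> simp [h], fromRows_mulVec_eq_one_iff.2 hx⟩
  · rintro x ⟨hx, hx1⟩
    obtain ⟨hsrc, htgt⟩ := fromRows_mulVec_eq_one_iff.1 hx1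
    exact mem_convexHull_cycleCovers hinj hx hsrc htgt

end CycleCover

theorem dim_directed_two_factor_polytope_general
    (n m : ℕ) (src tgt : Fin m → Fin n)
    (h_simple : ∀ e f : Fin m, src e = src f → tgt e = tgt f → e = f)
    (U V : Matrix (Fin n) (Fin m) ℝ)
    (hU : ∀ i e, U i e = if src e = i then 1 else 0)
    (hV : ∀ i e, V i e = if tgt e = i then 1 else 0)
    (P : Set (Fin m → ℝ))
    (hP : P = {x | (∀ e, x e = 0 ∨ x e = 1) ∧ U.mulVec x = 1 ∧ V.mulVec x = 1})
    (hPne : P.Nonempty)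
    (hJempty : ∀ f : Fin m, ∃ x ∈ P, x f ≠ 0) :
    Module.finrank ℝ (affineSpan ℝ (convexHull ℝ P)).direction
      = m - (Matrix.fromRows U V).rank := by
  obtain rfl : U = incidenceMatrix src := Matrix.ext hU
  obtain rfl : V = incidenceMatrix tgt := Matrix.ext hV
  obtain rfl : P = cycleCovers src tgt := hP
  have hconv := convexHull_cycleCovers fun e f h => h_simple e f congr($h.1) congr($h.2)
  obtain ⟨p, hp, hpos⟩ := exists_pos_mem_convexHull hPne
    (fun x hx => (hconv ▸ subset_convexHull ℝ _ hx).1) hJempty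
  rw [hconv] at hp ⊢
  rw [direction_affineSpan_setOf_nonneg_mulVec_eq hpos hp.2, Matrix.finrank_ker_mulVecLin,
    Fintype.card_fin]

/-- Under the assumption that the set of cycle covers `P` is nonempty and
every arc of `G` is used by at least one cycle cover, the dimension of the directed
2-factor polytope `Conv(P)` equals `m - α`, where `α` is the rank of the stacked
matrix `[U; V]`. -/
theorem dim_directed_two_factor_polytope
    (n m : ℕ) (src tgt : Fin m → Fin n)
    (h_simple : ∀ e f : Fin m, src e = src f → tgt e = tgt f → e = f)
    (h_noloop : ∀ e : Fin m, src e ≠ tgt e)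
    (U V : Matrix (Fin n) (Fin m) ℝ)
    (hU : ∀ i e, U i e = if src e = i then 1 else 0)
    (hV : ∀ i e, V i e = if tgt e = i then 1 else 0)
    (P : Set (Fin m → ℝ))
    (hP : P = {x | (∀ e, x e = 0 ∨ x e = 1) ∧ U.mulVec x = 1 ∧ V.mulVec x = 1})
    (hPne : P.Nonempty)
    (hJempty : ∀ f : Fin m, ∃ x ∈ P, x f ≠ 0) :
    Module.finrank ℝ (affineSpan ℝ (convexHull ℝ P)).direction
      = m - (Matrix.fromRows U V).rank :=
  dim_directed_two_factor_polytope_general n m src tgt h_simple U V hU hV P hP hPne hJempty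
end

section
/- Let x ∈ ℝ^m and X ∈ S^m be such that the (m+1)×(m+1) block matrix [[1, x^T],[x, X]] is positive semidefinite, diag(X) = x, tr(X) = n, and ⟨J_m, X⟩ = n² (J_m the all-ones m×m matrix). If ⟨u_i u_i^T, X⟩ = ⟨v_i v_i^T, X⟩ = 1 for all i ∈ N, then ⟨u_i u_j^T, X⟩ = 1 and ⟨v_i v_j^T, X⟩ = 1 for all i, j ∈ N with i ≠ j, and ⟨u_i v_j^T, X⟩ = 1 for all i, j ∈ N. -/
/-!
For `X ⪰ 0` and vectors with `a ⬝ᵥ X *ᵥ a = b ⬝ᵥ X *ᵥ b = 1`, expanding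
`(a - b) ⬝ᵥ X *ᵥ (a - b) ≥ 0` gives `a ⬝ᵥ X *ᵥ b ≤ 1`. The `u i` sum to the all-ones vector, and
so do the `v j`; hence `⟨J, X⟩ = 1 ⬝ᵥ X *ᵥ 1` is the sum of the `n²` numbers `u i ⬝ᵥ X *ᵥ v j`
(likewise of the `u i ⬝ᵥ X *ᵥ u j`, and of the `v i ⬝ᵥ X *ᵥ v j`), each at most `1`. As this sum
equals `n²`, every term equals `1`.
-/

open Matrix

noncomputable section

/-- Trace inner product `⟨M, N⟩ = tr(Mᵀ N)` on real matrices. -/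
def tip {k l : ℕ} (M N : Matrix (Fin k) (Fin l) ℝ) : ℝ := (Mᵀ * N).trace

/-- The extended matrix `[[1, xᵀ], [x, X]]`, with the top row/column indexed by `0`. -/
def extM {m : ℕ} (x : Fin m → ℝ) (X : Matrix (Fin m) (Fin m) ℝ) :
    Matrix (Fin (m + 1)) (Fin (m + 1)) ℝ :=
  Matrix.of (Fin.cons (Fin.cons 1 x) (fun i => Fin.cons (x i) (fun j => X i j)))

lemma tip_vecMulVec {m : ℕ} (a b : Fin m → ℝ) (X : Matrix (Fin m) (Fin m) ℝ) :
    tip (vecMulVec a b) X = a ⬝ᵥ X *ᵥ b := by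
  simp only [tip, trace, diag, mul_apply, transpose_apply, vecMulVec_apply, dotProduct,
    mulVec, Finset.mul_sum]
  rw [Finset.sum_comm]
  exact Finset.sum_congr rfl fun _ _ => Finset.sum_congr rfl fun _ _ => by ring

lemma extM_posSemidef_lower {m : ℕ} {x : Fin m → ℝ} {X : Matrix (Fin m) (Fin m) ℝ}
    (hpsd : (extM x X).PosSemidef) : X.PosSemidef := by
  have hsub : (extM x X).submatrix Fin.succ Fin.succ = X := by
    ext i j
    simp [extM]
  exact hsub ▸ hpsd.submatrix Fin.succ

lemma Matrix.PosSemidef.two_mul_dotProduct_mulVec_le {ι : Type*} [Fintype ι]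
    {X : Matrix ι ι ℝ} (hX : X.PosSemidef) (a b : ι → ℝ) :
    2 * (a ⬝ᵥ X *ᵥ b) ≤ a ⬝ᵥ X *ᵥ a + b ⬝ᵥ X *ᵥ b := by
  have hsymm : b ⬝ᵥ X *ᵥ a = a ⬝ᵥ X *ᵥ b := by
    rw [dotProduct_mulVec, ← mulVec_transpose, dotProduct_comm,
      ← conjTranspose_eq_transpose_of_trivial, hX.isHermitian.eq]
  have hnonneg := hX.dotProduct_mulVec_nonneg (a - b)
  simp only [star_trivial, mulVec_sub, sub_dotProduct, dotProduct_sub] at hnonneg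
  linarith

lemma sum_indicator_fiber {α ι : Type*} [Fintype ι] [DecidableEq ι] (f : α → ι) :
    ∑ i, (fun e => if f e = i then (1 : ℝ) else 0) = 1 := by
  ext e
  simp

lemma Matrix.PosSemidef.dotProduct_mulVec_eq_one_of_sum {ι κ μ : Type*} [Fintype ι]
    [Fintype κ] [Fintype μ] {X : Matrix μ μ ℝ} (hX : X.PosSemidef)
    (a : ι → μ → ℝ) (b : κ → μ → ℝ)
    (ha : ∀ i, a i ⬝ᵥ X *ᵥ a i = 1) (hb : ∀ j, b j ⬝ᵥ X *ᵥ b j = 1)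
    (hsum : (∑ i, a i) ⬝ᵥ X *ᵥ (∑ j, b j) = Fintype.card ι * Fintype.card κ)
    (i : ι) (j : κ) : a i ⬝ᵥ X *ᵥ b j = 1 := by
  have hle : ∀ p ∈ (Finset.univ : Finset (ι × κ)), a p.1 ⬝ᵥ X *ᵥ b p.2 ≤ 1 := fun p _ => by
    linarith [hX.two_mul_dotProduct_mulVec_le (a p.1) (b p.2), ha p.1, hb p.2]
  have heq : ∑ p : ι × κ, a p.1 ⬝ᵥ X *ᵥ b p.2 = ∑ _p : ι × κ, (1 : ℝ) := by
    rw [Finset.sum_const, Finset.card_univ, Fintype.card_prod, nsmul_one, Nat.cast_mul, ← hsum,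
      Fintype.sum_prod_type, sum_dotProduct]
    simp only [mulVec_sum, dotProduct_sum]
  exact (Finset.sum_eq_sum_iff_of_le hle).mp heq (i, j) (Finset.mem_univ _)

theorem typeII_typeIII_redundant_general
    (n m : ℕ) (src tgt : Fin m → Fin n)
    (u v : Fin n → Fin m → ℝ)
    (hu : ∀ i e, u i e = if src e = i then 1 else 0)
    (hv : ∀ i e, v i e = if tgt e = i then 1 else 0)
    (x : Fin m → ℝ) (X : Matrix (Fin m) (Fin m) ℝ)
    (hpsd : (extM x X).PosSemidef)
    (hallones : tip (Matrix.of fun _ _ => (1 : ℝ)) X = (n : ℝ) ^ 2)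
    (hTypeI : ∀ i, tip (vecMulVec (u i) (u i)) X = 1 ∧ tip (vecMulVec (v i) (v i)) X = 1) :
    (∀ i j : Fin n, i ≠ j →
        tip (vecMulVec (u i) (u j)) X = 1 ∧ tip (vecMulVec (v i) (v j)) X = 1) ∧
      (∀ i j : Fin n, tip (vecMulVec (u i) (v j)) X = 1) := by
  have hX := extM_posSemidef_lower hpsd
  have hu_sum : ∑ i, u i = 1 := by
    simpa only [← funext fun i => funext (hu i)] using sum_indicator_fiber src
  have hv_sum : ∑ i, v i = 1 := by
    simpa only [← funext fun i => funext (hv i)] using sum_indicator_fiber tgt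
  have hJ : (1 : Fin m → ℝ) ⬝ᵥ X *ᵥ 1 = Fintype.card (Fin n) * Fintype.card (Fin n) := by
    rw [← tip_vecMulVec, Fintype.card_fin, ← sq, ← hallones]
    congr 1
    ext
    simp [vecMulVec_apply]
  simp only [tip_vecMulVec] at hTypeI ⊢
  have hIu i := (hTypeI i).1
  have hIv i := (hTypeI i).2
  refine ⟨fun i j _ => ⟨?_, ?_⟩, fun i j => ?_⟩
  · exact hX.dotProduct_mulVec_eq_one_of_sum u u hIu hIu (by rw [hu_sum]; exact hJ) i j
  · exact hX.dotProduct_mulVec_eq_one_of_sum v v hIv hIv (by rw [hv_sum]; exact hJ) i j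
  · exact hX.dotProduct_mulVec_eq_one_of_sum u v hIu hIv (by rw [hu_sum, hv_sum]; exact hJ) i j

/-- if the extended matrix `[[1,xᵀ],[x,X]]` is PSD, `diag(X) = x`,
`tr(X) = n`, `⟨J, X⟩ = n²` and the Type I squared linear constraints hold, then the
Type II and Type III squared linear constraints hold as well. -/
theorem typeII_typeIII_redundant
    (n m : ℕ) (src tgt : Fin m → Fin n)
    (h_simple : ∀ e f : Fin m, src e = src f → tgt e = tgt f → e = f)
    (h_noloop : ∀ e : Fin m, src e ≠ tgt e)
    (u v : Fin n → Fin m → ℝ)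
    (hu : ∀ i e, u i e = if src e = i then 1 else 0)
    (hv : ∀ i e, v i e = if tgt e = i then 1 else 0)
    (x : Fin m → ℝ) (X : Matrix (Fin m) (Fin m) ℝ)
    (hXsymm : X.IsSymm)
    (hpsd : (extM x X).PosSemidef)
    (hdiag : X.diag = x)
    (htrace : X.trace = (n : ℝ))
    (hallones : tip (Matrix.of fun _ _ => (1 : ℝ)) X = (n : ℝ) ^ 2)
    (hTypeI : ∀ i, tip (vecMulVec (u i) (u i)) X = 1 ∧ tip (vecMulVec (v i) (v i)) X = 1) :
    (∀ i j : Fin n, i ≠ j →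
        tip (vecMulVec (u i) (u j)) X = 1 ∧ tip (vecMulVec (v i) (v j)) X = 1) ∧
      (∀ i j : Fin n, tip (vecMulVec (u i) (v j)) X = 1) :=
  typeII_typeIII_redundant_general n m src tgt u v hu hv x X hpsd hallones hTypeI
end
end

section
/- Let x ∈ ℝ^m and X ∈ S^m be such that the (m+1)×(m+1) block matrix [[1, x^T],[x, X]] is positive semidefinite, diag(X) = x, tr(X) = n, and ⟨J_m, X⟩ = n². If ⟨u_i u_i^T, X⟩ = ⟨v_i v_i^T, X⟩ = 1 for all i ∈ N, then u_i^T x = 1 and v_i^T x = 1 for all i ∈ N. -/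
open Matrix

noncomputable section

/-! The PSD block matrix gives `(wᵀx)² ≤ wᵀXw`, so each squared constraint `⟨wwᵀ, X⟩ = 1`
forces `wᵀx ≤ 1`. Summing over nodes, `∑ᵢ uᵢᵀx = 1ᵀx = tr X = n`, so these `n` numbers,
each at most `1`, must all equal `1`; likewise for the `vᵢ`. -/

theorem tip_vecMulVec_self {m : ℕ} (w : Fin m → ℝ) (X : Matrix (Fin m) (Fin m) ℝ) :
    tip (vecMulVec w w) X = w ⬝ᵥ (X *ᵥ w) := by
  simp only [tip, trace, diag, mul_apply, transpose_apply, vecMulVec_apply, dotProduct, mulVec,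
    Finset.mul_sum]
  rw [Finset.sum_comm]
  exact Finset.sum_congr rfl fun e _ => Finset.sum_congr rfl fun f _ => by ring

theorem Fin.cons_dotProduct_cons {α : Type*} [AddCommMonoid α] [Mul α] {m : ℕ} (a b : α)
    (p q : Fin m → α) : (Fin.cons a p : Fin (m + 1) → α) ⬝ᵥ Fin.cons b q = a * b + p ⬝ᵥ q :=
  Matrix.cons_dotProduct_cons a p b q

theorem extM_mulVec_cons {m : ℕ} (x w : Fin m → ℝ) (X : Matrix (Fin m) (Fin m) ℝ) (c : ℝ) :
    extM x X *ᵥ Fin.cons c w = Fin.cons (c + x ⬝ᵥ w) (c • x + X *ᵥ w) := by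
  ext i
  refine Fin.cases ?_ (fun j => ?_) i <;>
    simp [mulVec, dotProduct, extM, Fin.sum_univ_succ, mul_comm]

theorem cons_dotProduct_extM_mulVec_cons {m : ℕ} (x w : Fin m → ℝ)
    (X : Matrix (Fin m) (Fin m) ℝ) (c : ℝ) :
    (Fin.cons c w : Fin (m + 1) → ℝ) ⬝ᵥ (extM x X *ᵥ Fin.cons c w) =
      c ^ 2 + 2 * c * (w ⬝ᵥ x) + w ⬝ᵥ (X *ᵥ w) := by
  rw [extM_mulVec_cons, Fin.cons_dotProduct_cons, dotProduct_add, dotProduct_smul,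
    dotProduct_comm x, smul_eq_mul]
  ring

theorem sq_dotProduct_le_of_extM_posSemidef {m : ℕ} {x : Fin m → ℝ}
    {X : Matrix (Fin m) (Fin m) ℝ} (hpsd : (extM x X).PosSemidef) (w : Fin m → ℝ) :
    (w ⬝ᵥ x) ^ 2 ≤ w ⬝ᵥ (X *ᵥ w) := by
  have h := hpsd.dotProduct_mulVec_nonneg (Fin.cons (-(w ⬝ᵥ x)) w)
  rw [star_trivial, cons_dotProduct_extM_mulVec_cons] at h
  linarith

theorem sum_indicator_dotProduct {ι κ : Type*} [Fintype ι] [Fintype κ] [DecidableEq κ]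
    (f : ι → κ) (x : ι → ℝ) :
    ∑ k, (fun e => if f e = k then (1 : ℝ) else 0) ⬝ᵥ x = ∑ e, x e := by
  simp only [dotProduct, ite_mul, one_mul, zero_mul]
  rw [Finset.sum_comm]
  simp

theorem eq_one_of_le_one_of_sum_eq_card {κ : Type*} [Fintype κ] {a : κ → ℝ}
    (hle : ∀ k, a k ≤ 1) (hsum : ∑ k, a k = Fintype.card κ) (k : κ) : a k = 1 := by
  have hall := (Finset.sum_eq_sum_iff_of_le (s := Finset.univ) (g := fun _ => 1)
    fun k _ => hle k).mp (by simpa using hsum)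
  exact hall k (Finset.mem_univ k)

theorem linear_constraints_redundant_general
    (n m : ℕ) (src tgt : Fin m → Fin n)
    (u v : Fin n → Fin m → ℝ)
    (hu : ∀ i e, u i e = if src e = i then 1 else 0)
    (hv : ∀ i e, v i e = if tgt e = i then 1 else 0)
    (x : Fin m → ℝ) (X : Matrix (Fin m) (Fin m) ℝ)
    (hpsd : (extM x X).PosSemidef)
    (hdiag : X.diag = x)
    (htrace : X.trace = (n : ℝ))
    (hTypeI : ∀ i, tip (vecMulVec (u i) (u i)) X = 1 ∧ tip (vecMulVec (v i) (v i)) X = 1) :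
    ∀ i : Fin n, u i ⬝ᵥ x = 1 ∧ v i ⬝ᵥ x = 1 := by
  have hle : ∀ w, tip (vecMulVec w w) X = 1 → w ⬝ᵥ x ≤ 1 := fun w hw => by
    have hsq := sq_dotProduct_le_of_extM_posSemidef hpsd w
    rw [← tip_vecMulVec_self, hw] at hsq
    exact le_of_sq_le_sq (by rwa [one_pow]) zero_le_one
  have hsum : ∑ e, x e = n := by rw [← htrace, ← hdiag]; rfl
  have hsum_incidence (f : Fin m → Fin n) :
      ∑ i, (fun e => if f e = i then (1 : ℝ) else 0) ⬝ᵥ x = Fintype.card (Fin n) := by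
    rw [sum_indicator_dotProduct, hsum, Fintype.card_fin]
  obtain rfl : u = fun i e => if src e = i then 1 else 0 := funext fun i => funext (hu i)
  obtain rfl : v = fun i e => if tgt e = i then 1 else 0 := funext fun i => funext (hv i)
  exact fun i =>
    ⟨eq_one_of_le_one_of_sum_eq_card (fun k => hle _ (hTypeI k).1) (hsum_incidence src) i,
      eq_one_of_le_one_of_sum_eq_card (fun k => hle _ (hTypeI k).2) (hsum_incidence tgt) i⟩

/-- if the extended matrix `[[1,xᵀ],[x,X]]` is PSD, `diag(X) = x`,
`tr(X) = n`, `⟨J, X⟩ = n²` and the Type I squared linear constraints hold, then the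
linear constraints `uᵢᵀ x = 1` and `vᵢᵀ x = 1` hold for all `i ∈ N`. -/
theorem linear_constraints_redundant
    (n m : ℕ) (src tgt : Fin m → Fin n)
    (h_simple : ∀ e f : Fin m, src e = src f → tgt e = tgt f → e = f)
    (h_noloop : ∀ e : Fin m, src e ≠ tgt e)
    (u v : Fin n → Fin m → ℝ)
    (hu : ∀ i e, u i e = if src e = i then 1 else 0)
    (hv : ∀ i e, v i e = if tgt e = i then 1 else 0)
    (x : Fin m → ℝ) (X : Matrix (Fin m) (Fin m) ℝ)
    (hXsymm : X.IsSymm)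
    (hpsd : (extM x X).PosSemidef)
    (hdiag : X.diag = x)
    (htrace : X.trace = (n : ℝ))
    (hallones : tip (Matrix.of fun _ _ => (1 : ℝ)) X = (n : ℝ) ^ 2)
    (hTypeI : ∀ i, tip (vecMulVec (u i) (u i)) X = 1 ∧ tip (vecMulVec (v i) (v i)) X = 1) :
    ∀ i : Fin n, u i ⬝ᵥ x = 1 ∧ v i ⬝ᵥ x = 1 :=
  linear_constraints_redundant_general n m src tgt u v hu hv x X hpsd hdiag htrace hTypeI
end
end

section
/- Let Y ∈ S^{m+1} be such that for every i ∈ N the vectors (−1; u_i) and (−1; v_i) lie in the null space of Y. Let w ∈ ℝ^{m+1} be an eigenvector of Y with w ≥ 0, ‖w‖ > 0, associated with a nonzero eigenvalue λ; write w = (w_0; w̄) with w_0 ∈ ℝ and w̄ ∈ ℝ^m. Then u_i^T w̄ = w_0 and v_i^T w̄ = w_0 for all i ∈ N, w_0 > 0, and the vector r = (1/w_0) w̄ satisfies r ≥ 0 and Ur = Vr = 1_n, i.e., r lies in the directed 2-factor polytope {x ∈ ℝ^m : x ≥ 0, Ux = Vx = 1_n}. -/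
open Matrix

noncomputable section

/-- let `Y ∈ S^{m+1}` annihilate all vectors `(-1; uᵢ)` and `(-1; vᵢ)`,
and let `w ≥ 0`, `w ≠ 0` be an eigenvector of `Y` for a nonzero eigenvalue. Writing
`w = (w₀; w̄)`, we have `uᵢᵀ w̄ = vᵢᵀ w̄ = w₀` for all `i`, `w₀ > 0`, and
`r = (1/w₀) w̄` lies in the directed 2-factor polytope
`{x : x ≥ 0, Ux = Vx = 1ₙ}`. -/
theorem perron_eigenvector_in_two_factor_polytope
    (n m : ℕ) (src tgt : Fin m → Fin n)
    (h_simple : ∀ e f : Fin m, src e = src f → tgt e = tgt f → e = f)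
    (h_noloop : ∀ e : Fin m, src e ≠ tgt e)
    (U V : Matrix (Fin n) (Fin m) ℝ)
    (hU : ∀ i e, U i e = if src e = i then 1 else 0)
    (hV : ∀ i e, V i e = if tgt e = i then 1 else 0)
    (Y : Matrix (Fin (m + 1)) (Fin (m + 1)) ℝ)
    (hYsymm : Y.IsSymm)
    (hnull : ∀ i : Fin n,
        Y.mulVec (Fin.cons (-1) (U i)) = 0 ∧ Y.mulVec (Fin.cons (-1) (V i)) = 0)
    (w : Fin (m + 1) → ℝ) (lam : ℝ) (hlam : lam ≠ 0)
    (heig : Y.mulVec w = lam • w)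
    (hwnonneg : ∀ j, 0 ≤ w j) (hwne : w ≠ 0)
    (wbar : Fin m → ℝ) (hwbar : ∀ e, wbar e = w e.succ)
    (r : Fin m → ℝ) (hr : r = (w 0)⁻¹ • wbar) :
    (∀ i : Fin n, U i ⬝ᵥ wbar = w 0 ∧ V i ⬝ᵥ wbar = w 0) ∧
      0 < w 0 ∧
      (∀ e, 0 ≤ r e) ∧ U.mulVec r = 1 ∧ V.mulVec r = 1 := by

  -- any null vector of `Y` is orthogonal to `w`
  have key : ∀ z : Fin (m+1) → ℝ, Y.mulVec z = 0 → z ⬝ᵥ w = 0 := by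
    intro z hz
    have hzw : z ⬝ᵥ Y.mulVec w = 0 := by
      rw [Matrix.dotProduct_mulVec]
      have hv : Y.vecMul z = 0 := by
        rw [← Matrix.mulVec_transpose, hYsymm.eq, hz]
      rw [hv, zero_dotProduct]
    rw [heig] at hzw
    have h1 : lam * (z ⬝ᵥ w) = 0 := by
      simpa [dotProduct_smul, smul_eq_mul] using hzw
    exact (mul_eq_zero.mp h1).resolve_left hlam
  have hU' : ∀ i, U i ⬝ᵥ wbar = w 0 := by
    intro i
    have h0 := key _ (hnull i).1
    have hexp : (Fin.cons (-1) (U i) : Fin (m+1) → ℝ) ⬝ᵥ w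
        = -(w 0) + U i ⬝ᵥ wbar := by
      simp [dotProduct, Fin.sum_univ_succ, hwbar]
    rw [hexp] at h0
    linarith
  have hV' : ∀ i, V i ⬝ᵥ wbar = w 0 := by
    intro i
    have h0 := key _ (hnull i).2
    have hexp : (Fin.cons (-1) (V i) : Fin (m+1) → ℝ) ⬝ᵥ w
        = -(w 0) + V i ⬝ᵥ wbar := by
      simp [dotProduct, Fin.sum_univ_succ, hwbar]
    rw [hexp] at h0
    linarith
  have hwbarnn : ∀ e, 0 ≤ wbar e := fun e => (hwbar e) ▸ hwnonneg e.succ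
  have hw0 : 0 < w 0 := by
    rcases lt_or_eq_of_le (hwnonneg 0) with h | h
    · exact h
    · exfalso
      apply hwne
      have hbar : ∀ e : Fin m, wbar e = 0 := by
        intro e
        have hd : U (src e) ⬝ᵥ wbar = 0 := by rw [hU' (src e), ← h]
        have hnn : ∀ f ∈ Finset.univ, 0 ≤ U (src e) f * wbar f := by
          intro f _
          have : (0:ℝ) ≤ U (src e) f := by rw [hU]; positivity
          exact mul_nonneg this (hwbarnn f)
        have := (Finset.sum_eq_zero_iff_of_nonneg hnn).mp hd e (Finset.mem_univ e)
        rw [hU] at this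
        simpa using this
      funext j
      refine Fin.cases ?_ ?_ j
      · exact h.symm
      · intro e
        rw [← hwbar e, hbar e]
        rfl
  refine ⟨fun i => ⟨hU' i, hV' i⟩, hw0, ?_, ?_, ?_⟩
  · intro e
    rw [hr]
    exact mul_nonneg (inv_nonneg.mpr hw0.le) (hwbarnn e)
  · funext i
    rw [hr]
    simp only [Matrix.mulVec, dotProduct_smul]
    rw [hU' i]
    simp [smul_eq_mul, inv_mul_cancel₀ hw0.ne']
  · funext i
    rw [hr]
    simp only [Matrix.mulVec, dotProduct_smul]
    rw [hV' i]
    simp [smul_eq_mul, inv_mul_cancel₀ hw0.ne']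
end
end
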